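/- arXiv:2207.03972 — 2 statements merged into one kernel-verified Lean document; each statement's English description precedes it below -/
import Mathlib

section
/- For every element h of the group H = ⟨a, b, t ∣ t·b·t⁻¹ = b, t·a·t⁻¹ = b·a⟩ there exists a unique triple (p, q, w) with p, q ∈ ℤ and w ∈ F₂ such that the reduced word of w does not begin with b or b⁻¹ and h = t^p · b^q · ι(w). -/
/-! The relations say that conjugation by `t` preserves the subgroup generated by `a` and `b`,
acting on it as the automorphism `a ↦ ba, b ↦ b` of `F₂`; hence `H ≅ F₂ ⋊ ℤ` and every element
of `H` is uniquely `t^p · ι(v)` with `v ∈ F₂`. Splitting off the maximal initial run of letters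
`b^{±1}` of the reduced word of `v` writes `v` uniquely as `b^q · w` with `w` not beginning
with `b^{±1}`. -/

/-- Generators of `H`: `a = 0`, `b = 1`, `t = 2`.
Relators: `t·b·t⁻¹·b⁻¹` and `t·a·t⁻¹·a⁻¹·b⁻¹`. -/
def hRels : Set (FreeGroup (Fin 3)) :=
  { FreeGroup.of (2 : Fin 3) * FreeGroup.of (1 : Fin 3) * (FreeGroup.of (2 : Fin 3))⁻¹ *
      (FreeGroup.of (1 : Fin 3))⁻¹,
    FreeGroup.of (2 : Fin 3) * FreeGroup.of (0 : Fin 3) * (FreeGroup.of (2 : Fin 3))⁻¹ *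
      (FreeGroup.of (0 : Fin 3))⁻¹ * (FreeGroup.of (1 : Fin 3))⁻¹ }

/-- The group `H = ⟨a, b, t ∣ t·b·t⁻¹ = b, t·a·t⁻¹ = b·a⟩`. -/
abbrev HGrp : Type := PresentedGroup hRels

/-- The image of the generator `a` in `H`. -/
def aH : HGrp := PresentedGroup.of 0
/-- The image of the generator `b` in `H`. -/
def bH : HGrp := PresentedGroup.of 1
/-- The image of the generator `t` in `H`. -/
def tH : HGrp := PresentedGroup.of 2

/-- The free group on two generators `a = 0`, `b = 1`. -/
abbrev F₂ : Type := FreeGroup (Fin 2)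

/-- `w ∈ F₂` does not begin with `b` or `b⁻¹`: the first letter of its reduced word
(if any) is not the generator `b = 1`. -/
def NoLeadB (w : F₂) : Prop := ∀ l ∈ w.toWord.head?, l.1 ≠ (1 : Fin 2)

/-- The homomorphism `ι : F₂ →* H` sending the generators `a`, `b` of `F₂` to the
elements `a`, `b` of `H`. -/
def ι : F₂ →* HGrp := FreeGroup.lift (fun i => if i = 0 then aH else bH)

theorem Function.Semiconj.mulAut_zpow {M N : Type*} [Mul M] [Mul N] {f : M → N}
    {σ : MulAut M} {τ : MulAut N} (h : Function.Semiconj f σ τ) (n : ℤ) :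
    Function.Semiconj f ⇑(σ ^ n) ⇑(τ ^ n) := by
  have h_inv : Function.Semiconj f ⇑σ⁻¹ ⇑τ⁻¹ :=
    h.inverses_right σ.apply_symm_apply τ.symm_apply_apply
  induction n using Int.induction_on with
  | zero => exact fun _ => rfl
  | succ n ih => simpa only [zpow_add_one, MulAut.coe_mul] using ih.comp_right h
  | pred n ih => simpa only [zpow_sub_one, MulAut.coe_mul] using ih.comp_right h_inv

namespace FreeGroup

variable {α : Type*}

theorem mk_mem_zpowers_of_forall_fst_eq {b : α} :
    ∀ {L : List (α × Bool)}, (∀ l ∈ L, l.1 = b) → mk L ∈ Subgroup.zpowers (of b)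
  | [], _ => Subgroup.one_mem _
  | (c, s) :: L, hL => by
    obtain rfl : c = b := hL _ List.mem_cons_self
    rw [← List.singleton_append, ← mul_mk]
    refine Subgroup.mul_mem _ ?_ <|
      mk_mem_zpowers_of_forall_fst_eq fun l hl => hL l (List.mem_cons_of_mem _ hl)
    cases s
    · exact Subgroup.inv_mem _ (Subgroup.mem_zpowers (of c))
    · exact Subgroup.mem_zpowers (of c)

variable [DecidableEq α]

theorem toWord_of_zpow (b : α) (n : ℤ) :
    (of b ^ n).toWord = List.replicate n.natAbs (b, decide (0 ≤ n)) := by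
  rcases n with n | n
  · simp
  · simp [zpow_negSucc, invRev, List.map_replicate]

theorem toWord_of_zpow_mul {b : α} {w : FreeGroup α} (hw : ∀ l ∈ w.toWord.head?, l.1 ≠ b)
    (n : ℤ) : (of b ^ n * w).toWord = List.replicate n.natAbs (b, decide (0 ≤ n)) ++ w.toWord := by
  rw [toWord_mul, toWord_of_zpow, IsReduced.reduce_eq]
  refine List.isChain_append.2 ⟨List.isChain_replicate_of_rel _ fun _ => rfl, isReduced_toWord,
    fun x hx y hy hxy => absurd ?_ (hw y hy)⟩
  rw [← hxy, (List.mem_replicate.1 (List.mem_of_getLast? hx)).2]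

theorem exists_eq_of_zpow_mul (b : α) (v : FreeGroup α) :
    ∃ (q : ℤ) (w : FreeGroup α), (∀ l ∈ w.toWord.head?, l.1 ≠ b) ∧ v = of b ^ q * w := by
  let p : α × Bool → Bool := fun l => decide (l.1 = b)
  obtain ⟨q, hq⟩ := Subgroup.mem_zpowers_iff.1 <|
    mk_mem_zpowers_of_forall_fst_eq (L := v.toWord.takeWhile p) fun l hl => by
      simpa [p] using List.mem_takeWhile_imp hl
  have hred : IsReduced (v.toWord.dropWhile p) :=
    isReduced_toWord.infix (List.dropWhile_suffix p).isInfix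
  refine ⟨q, mk (v.toWord.dropWhile p), ?_, ?_⟩
  · rw [toWord_mk, hred.reduce_eq]
    intro l hl
    have := List.head?_dropWhile_not p v.toWord
    rw [hl] at this
    simpa [p] using this
  · rw [hq, mul_mk, List.takeWhile_append_dropWhile, mk_toWord]

theorem of_zpow_mul_injective {b : α} {q q' : ℤ} {w w' : FreeGroup α}
    (hw : ∀ l ∈ w.toWord.head?, l.1 ≠ b) (hw' : ∀ l ∈ w'.toWord.head?, l.1 ≠ b)
    (h : of b ^ q * w = of b ^ q' * w') : q = q' ∧ w = w' := by
  have hw'_eq : w' = of b ^ (-q' + q) * w := by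
    rw [zpow_add, mul_assoc, h, zpow_neg, inv_mul_cancel_left]
  suffices hq : -q' + q = 0 by
    rw [hq, zpow_zero, one_mul] at hw'_eq
    exact ⟨by omega, hw'_eq.symm⟩
  by_contra hq
  obtain ⟨k, hk⟩ := Nat.exists_eq_succ_of_ne_zero (Int.natAbs_ne_zero.2 hq)
  apply hw' (b, decide (0 ≤ -q' + q)) _ rfl
  rw [hw'_eq, toWord_of_zpow_mul hw, hk]
  rfl

end FreeGroup

namespace SemidirectProduct

variable {N G : Type*} [Group N] [Group G] {φ : G →* MulAut N}

theorem exists_inr_mul_inl (g : N ⋊[φ] G) : ∃ x n, g = inr x * inl n :=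
  ⟨g.right, φ (g.right⁻¹) g.left, by ext <;> simp⟩

theorem inr_mul_inl_injective {x y : G} {n m : N}
    (h : (inr x * inl n : N ⋊[φ] G) = inr y * inl m) : x = y ∧ n = m := by
  obtain rfl : x = y := by simpa using congrArg right h
  exact ⟨rfl, inl_injective (mul_left_cancel h)⟩

end SemidirectProduct

open FreeGroup (of)
open SemidirectProduct

theorem tH_mul_bH_mul_inv : tH * bH * tH⁻¹ = bH := by
  have := PresentedGroup.one_of_mem (rels := hRels) (Set.mem_insert _ _)
  exact mul_inv_eq_one.1 this

theorem tH_mul_aH_mul_inv : tH * aH * tH⁻¹ = bH * aH := by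
  have := PresentedGroup.one_of_mem (rels := hRels) (Set.mem_insert_of_mem _ rfl)
  exact mul_inv_eq_iff_eq_mul.1 (mul_inv_eq_one.1 this)

theorem ι_of_zero : ι (of 0) = aH := by simp [ι]

theorem ι_of_one : ι (of 1) = bH := by simp [ι]

def tAut : MulAut F₂ :=
  MonoidHom.toMulEquiv (FreeGroup.lift ![of 1 * of 0, of 1])
    (FreeGroup.lift ![(of 1)⁻¹ * of 0, of 1])
    (by ext i; fin_cases i <;> simp) (by ext i; fin_cases i <;> simp)

@[simp] theorem tAut_of_zero : tAut (of 0) = of 1 * of 0 := by simp [tAut]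

@[simp] theorem tAut_of_one : tAut (of 1) = of 1 := by simp [tAut]

theorem semiconj_ι_tAut : Function.Semiconj ι tAut (MulAut.conj tH) := by
  suffices ι.comp tAut.toMonoidHom = (MulAut.conj tH).toMonoidHom.comp ι from
    DFunLike.congr_fun this
  ext i
  fin_cases i
  · simp [ι_of_zero, ι_of_one, tH_mul_aH_mul_inv]
  · simp [ι_of_one, tH_mul_bH_mul_inv]

abbrev HSemidirect : Type := F₂ ⋊[zpowersHom (MulAut F₂) tAut] Multiplicative ℤ

def ofSemidirect : HSemidirect →* HGrp :=
  SemidirectProduct.lift ι (zpowersHom HGrp tH) fun g => by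
    ext w
    simp [zpowersHom_apply, (semiconj_ι_tAut.mulAut_zpow _) (of w), ← map_zpow]

theorem ofSemidirect_inr_mul_inl (p : ℤ) (v : F₂) :
    ofSemidirect (inr (Multiplicative.ofAdd p) * inl v) = tH ^ p * ι v := by
  simp [ofSemidirect]

theorem inr_one_mul_inl_mul_inv (v : F₂) :
    (inr (Multiplicative.ofAdd 1) * inl v * (inr (Multiplicative.ofAdd 1))⁻¹ : HSemidirect) =
      inl (tAut v) := by
  rw [← map_inv, ← inl_aut, zpowersHom_apply, toAdd_ofAdd, zpow_one]

def toSemidirect : HGrp →* HSemidirect :=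
  PresentedGroup.toGroup (f := ![inl (of 0), inl (of 1), inr (Multiplicative.ofAdd 1)]) <| by
    rintro r (rfl | rfl)
    · simp [inr_one_mul_inl_mul_inv]
    · simp only [map_mul, map_inv, FreeGroup.lift_apply_of, Matrix.cons_val]
      rw [inr_one_mul_inl_mul_inv, tAut_of_zero, map_mul]
      group

theorem toSemidirect_comp_ι : toSemidirect.comp ι = inl := by
  apply FreeGroup.ext_hom
  intro i
  fin_cases i <;> simp [toSemidirect, ι_of_zero, ι_of_one, aH, bH]

theorem toSemidirect_tH_zpow_mul_ι (p : ℤ) (v : F₂) :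
    toSemidirect (tH ^ p * ι v) = inr (Multiplicative.ofAdd p) * inl v := by
  rw [map_mul, map_zpow, ← MonoidHom.comp_apply, toSemidirect_comp_ι]
  have ht : toSemidirect tH = inr (Multiplicative.ofAdd 1) := PresentedGroup.toGroup.of _
  rw [ht, ← map_zpow, ← ofAdd_zsmul, smul_eq_mul, mul_one]

theorem ofSemidirect_comp_toSemidirect : ofSemidirect.comp toSemidirect = MonoidHom.id HGrp := by
  ext i
  fin_cases i <;> simp [toSemidirect, ofSemidirect, ι_of_zero, ι_of_one, aH, bH, tH]

theorem exists_eq_tH_zpow_mul_ι (h : HGrp) : ∃ (p : ℤ) (v : F₂), h = tH ^ p * ι v := by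
  obtain ⟨x, v, hxv⟩ := exists_inr_mul_inl (toSemidirect h)
  refine ⟨x.toAdd, v, ?_⟩
  rw [← ofSemidirect_inr_mul_inl, ofAdd_toAdd, ← hxv, ← MonoidHom.comp_apply,
    ofSemidirect_comp_toSemidirect, MonoidHom.id_apply]

theorem tH_zpow_mul_ι_injective {p p' : ℤ} {v v' : F₂} (h : tH ^ p * ι v = tH ^ p' * ι v') :
    p = p' ∧ v = v' := by
  have h' := congrArg toSemidirect h
  rw [toSemidirect_tH_zpow_mul_ι, toSemidirect_tH_zpow_mul_ι] at h'
  obtain ⟨hp, hv⟩ := inr_mul_inl_injective h'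
  exact ⟨Multiplicative.ofAdd.injective hp, hv⟩

/-- Every element of `H` can be uniquely written as `t^p · b^q · ι(w)` with `p, q ∈ ℤ`
and `w ∈ F₂` a word not beginning with `b^{±1}`. -/
theorem exists_unique_normal_form (h : HGrp) :
    ∃! pqw : ℤ × ℤ × F₂, NoLeadB pqw.2.2 ∧ h = tH ^ pqw.1 * bH ^ pqw.2.1 * ι pqw.2.2 := by
  have hform (p q : ℤ) (w : F₂) : tH ^ p * bH ^ q * ι w = tH ^ p * ι (of 1 ^ q * w) := by
    rw [map_mul, map_zpow, ι_of_one, mul_assoc]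
  obtain ⟨p, v, rfl⟩ := exists_eq_tH_zpow_mul_ι h
  obtain ⟨q, w, hw, rfl⟩ := FreeGroup.exists_eq_of_zpow_mul 1 v
  refine ⟨(p, q, w), ⟨hw, (hform p q w).symm⟩, ?_⟩
  rintro ⟨p', q', w'⟩ ⟨hw', h'⟩
  rw [hform] at h'
  obtain ⟨rfl, hv⟩ := tH_zpow_mul_ι_injective h'
  obtain ⟨rfl, rfl⟩ := FreeGroup.of_zpow_mul_injective hw hw' hv
  rfl
end

section
/- Let G be the presented group ⟨a₁, t₁, a₂, t₂, b ∣ [t₁,a₁]·b⁻¹, [t₂,a₂]·b⁻¹, [t₁,b], [t₂,b]⟩ and let H be the presented group ⟨a, b, t ∣ t·b·t⁻¹ = b, t·a·t⁻¹ = b·a⟩. Then G is isomorphic to the amalgamated free product H *_⟨b⟩ H, i.e. to the pushout of the two copies of the homomorphism ℤ →* H sending n to bⁿ. Moreover, the isomorphism can be chosen so that a₁, t₁ map to the images of a, t from the first copy of H, a₂, t₂ map to the images of a, t from the second copy of H, and b maps to the common image of the amalgamated generator (the image of 1 ∈ ℤ). -/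
open scoped commutatorElement
/-- Generators of `G`: `a₁ = 0`, `t₁ = 1`, `a₂ = 2`, `t₂ = 3`, `b = 4`. -/
def gRels : Set (FreeGroup (Fin 5)) :=
  { ⁅FreeGroup.of (1 : Fin 5), FreeGroup.of (0 : Fin 5)⁆ * (FreeGroup.of (4 : Fin 5))⁻¹,
    ⁅FreeGroup.of (3 : Fin 5), FreeGroup.of (2 : Fin 5)⁆ * (FreeGroup.of (4 : Fin 5))⁻¹,
    ⁅FreeGroup.of (1 : Fin 5), FreeGroup.of (4 : Fin 5)⁆,
    ⁅FreeGroup.of (3 : Fin 5), FreeGroup.of (4 : Fin 5)⁆ }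

/-- The group `G = ⟨a₁, t₁, a₂, t₂, b ∣ [t₁,a₁]b⁻¹, [t₂,a₂]b⁻¹, [t₁,b], [t₂,b]⟩`. -/
abbrev GGrp : Type := PresentedGroup gRels

/-- The homomorphism `ℤ →* H`, `n ↦ bⁿ` (with `ℤ` written multiplicatively). -/
def φb : Multiplicative ℤ →* HGrp := zpowersHom HGrp bH

/-- The amalgamated free product `H *_⟨b⟩ H`: the pushout of two copies of `n ↦ bⁿ`. -/
abbrev HAmalg : Type := Monoid.PushoutI (fun _ : Fin 2 => φb)

open Monoid Multiplicative

lemma presented_rel_one {α : Type*} {rels : Set (FreeGroup α)} {r : FreeGroup α}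
    (h : r ∈ rels) : PresentedGroup.mk rels r = 1 :=
  (QuotientGroup.eq_one_iff _).mpr (Subgroup.subset_normalClosure h)

lemma hRel1 : tH * bH * tH⁻¹ * bH⁻¹ = 1 := by
  have := presented_rel_one (rels := hRels) (Or.inl rfl)
  simpa [aH, bH, tH, PresentedGroup.of, map_mul, map_inv] using this

lemma hRel2 : tH * aH * tH⁻¹ * aH⁻¹ * bH⁻¹ = 1 := by
  have := presented_rel_one (rels := hRels) (Or.inr rfl)
  simpa [aH, bH, tH, PresentedGroup.of, map_mul, map_inv] using this

lemma comm_tb : ⁅tH, bH⁆ = 1 := by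
  have := hRel1; group at this ⊢; simpa [commutatorElement] using this

lemma comm_ta : ⁅tH, aH⁆ = bH := by
  have := hRel2
  have : tH * aH * tH⁻¹ * aH⁻¹ = bH := by
    have h := mul_eq_one_iff_eq_inv.mp hRel2
    simpa using h
  simpa [commutatorElement_def, mul_assoc] using this

lemma phib_ofAdd_one : φb (ofAdd (1 : ℤ)) = bH := by
  simp [φb]

/-- forward target values -/
def fG : Fin 5 → HAmalg :=
  ![PushoutI.of (φ := fun _ : Fin 2 => φb) 0 aH,
    PushoutI.of (φ := fun _ : Fin 2 => φb) 0 tH,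
    PushoutI.of (φ := fun _ : Fin 2 => φb) 1 aH,
    PushoutI.of (φ := fun _ : Fin 2 => φb) 1 tH,
    PushoutI.base (fun _ : Fin 2 => φb) (ofAdd (1 : ℤ))]

lemma of_b_eq_base (i : Fin 2) :
    PushoutI.of (φ := fun _ : Fin 2 => φb) i bH
      = PushoutI.base (fun _ : Fin 2 => φb) (ofAdd (1 : ℤ)) := by
  rw [← phib_ofAdd_one]
  exact Monoid.PushoutI.of_apply_eq_base (φ := fun _ : Fin 2 => φb) i _

lemma of_b_eq_base' (i : Fin 2) :
    PushoutI.of (φ := fun _ : Fin 2 => φb) i (PresentedGroup.of (1 : Fin 3)) =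
      PushoutI.base (fun _ : Fin 2 => φb) (ofAdd (1 : ℤ)) := of_b_eq_base i

lemma fG_rels : ∀ r ∈ gRels, FreeGroup.lift fG r = 1 := by
  intro r hr
  have key : ∀ i : Fin 2,
      ⁅PushoutI.of (φ := fun _ : Fin 2 => φb) i tH,
       PushoutI.of (φ := fun _ : Fin 2 => φb) i aH⁆
        = PushoutI.base (fun _ : Fin 2 => φb) (ofAdd (1 : ℤ)) := by
    intro i
    rw [← map_commutatorElement, comm_ta, of_b_eq_base]
  have keyb : ∀ i : Fin 2,
      ⁅PushoutI.of (φ := fun _ : Fin 2 => φb) i tH,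
       PushoutI.base (fun _ : Fin 2 => φb) (ofAdd (1 : ℤ))⁆ = 1 := by
    intro i
    rw [← of_b_eq_base i, ← map_commutatorElement, comm_tb, map_one]
  rcases hr with h | h | h | h <;> subst h <;>
    simp [commutatorElement_def, fG, map_mul, map_inv] <;>
  · first
    | (have h := key 0; rw [commutatorElement_def] at h; rw [h]; group)
    | (have h := key 1; rw [commutatorElement_def] at h; rw [h]; group)
    | (have h := keyb 0; rw [commutatorElement_def] at h; exact h)
    | (have h := keyb 1; rw [commutatorElement_def] at h; exact h)

def θ : GGrp →* HAmalg := PresentedGroup.toGroup fG_rels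

/-- backward generator maps -/
def fH : Fin 2 → Fin 3 → GGrp :=
  ![![PresentedGroup.of 0, PresentedGroup.of 4, PresentedGroup.of 1],
    ![PresentedGroup.of 2, PresentedGroup.of 4, PresentedGroup.of 3]]

lemma gRel (r : FreeGroup (Fin 5)) (h : r ∈ gRels) : PresentedGroup.mk gRels r = 1 :=
  presented_rel_one h

lemma fH_rels (i : Fin 2) : ∀ r ∈ hRels, FreeGroup.lift (fH i) r = 1 := by
  intro r hr
  have g1 := gRel _ (Or.inl rfl)
  have g2 := gRel _ (Or.inr <| Or.inl rfl)
  have g3 := gRel _ (Or.inr <| Or.inr <| Or.inl rfl)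
  have g4 := gRel _ (Or.inr <| Or.inr <| Or.inr rfl)
  simp only [commutatorElement, map_mul, map_inv] at g1 g2 g3 g4
  fin_cases i <;> rcases hr with h | h <;> subst h <;>
    simp [fH, PresentedGroup.of, map_mul, map_inv] <;>
    first
      | (exact g3) | (exact g4) | (exact g1) | (exact g2)

def ψi (i : Fin 2) : HGrp →* GGrp := PresentedGroup.toGroup (fH_rels i)

lemma ψi_comp (i : Fin 2) : (ψi i).comp φb = zpowersHom GGrp (PresentedGroup.of 4) := by
  apply MonoidHom.ext_mint
  fin_cases i <;> simp [φb, ψi, bH, fH, PresentedGroup.toGroup.of]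

def ψ : HAmalg →* GGrp :=
  PushoutI.lift (fun i => ψi i) (zpowersHom GGrp (PresentedGroup.of 4)) ψi_comp


/-- `G ≅ H *_⟨b⟩ H`, via an isomorphism matching up the generators: `a₁, t₁` go to the
images of `a, t` from the first copy of `H`, `a₂, t₂` to those from the second copy, and
`b` to the image of the amalgamated generator `1 ∈ ℤ`. -/
theorem g_iso_amalgamated_product :
    ∃ e : GGrp ≃* HAmalg,
      e (PresentedGroup.of 0) = Monoid.PushoutI.of (φ := fun _ : Fin 2 => φb) 0 aH ∧
      e (PresentedGroup.of 1) = Monoid.PushoutI.of (φ := fun _ : Fin 2 => φb) 0 tH ∧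
      e (PresentedGroup.of 2) = Monoid.PushoutI.of (φ := fun _ : Fin 2 => φb) 1 aH ∧
      e (PresentedGroup.of 3) = Monoid.PushoutI.of (φ := fun _ : Fin 2 => φb) 1 tH ∧
      e (PresentedGroup.of 4) =
        Monoid.PushoutI.base (fun _ : Fin 2 => φb) (Multiplicative.ofAdd (1 : ℤ)) := by

  have h1 : ψ.comp θ = MonoidHom.id GGrp := by
    apply PresentedGroup.ext
    intro x
    fin_cases x <;>
      simp [θ, ψ, PresentedGroup.toGroup.of, fG, PushoutI.lift_of, PushoutI.lift_base,
        ψi, aH, tH, fH]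
  have h2 : θ.comp ψ = MonoidHom.id HAmalg := by
    apply PushoutI.hom_ext
    · intro i
      apply PresentedGroup.ext
      intro x
      fin_cases i <;> fin_cases x <;>
        simp [θ, ψ, PresentedGroup.toGroup.of, fG, PushoutI.lift_of, ψi, aH, tH, fH,
          of_b_eq_base']
    · apply MonoidHom.ext_mint
      simp [θ, ψ, PresentedGroup.toGroup.of, fG, PushoutI.lift_base]
  refine ⟨MonoidHom.toMulEquiv θ ψ h1 h2, ?_, ?_, ?_, ?_, ?_⟩ <;>
    simp [MonoidHom.toMulEquiv, θ, PresentedGroup.toGroup.of, fG]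
end
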